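/- Let β > −d, p' > 1, ρ < 0, n ≥ 1, and set σ(x) = |x|^β · max(|x|, 1)^{p'ρ/n}, assuming β + p'ρ/n > −d. Then for every cube S in ℝ^d, ∫_S σ dx ≤ C · |S| · max(ℓ_S, |c_S|)^β · max(ℓ_S, |c_S|, 1)^{p'ρ/n}, with C depending only on d, β, p', ρ, n. -/

import Mathlib

open MeasureTheory

/-- The axis-parallel cube in `ℝ^d` with center `c` and side length `ℓ`. -/
noncomputable def cube (d : ℕ) (c : EuclideanSpace ℝ (Fin d)) (ℓ : ℝ) :
    Set (EuclideanSpace ℝ (Fin d)) := {x | ∀ i, |x i - c i| ≤ ℓ / 2}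

/-!
Since the exponent `γ = p'ρ/n` is nonpositive, the weight is bounded by `‖x‖ ^ β` everywhere
and by `‖x‖ ^ (β + γ)` away from the origin; the first bound is used when
`M = max ℓ ‖c‖ < 1`, the second when `M ≥ 1`. Both reduce to `∫_S ‖x‖ ^ γ ≤ K ℓ^d M^γ` for
`γ > -d`. If `‖c‖ ≥ √d ℓ`, the cube lies in the shell `‖c‖/2 ≤ ‖x‖ ≤ 3‖c‖/2`, where `‖x‖ ^ γ`
is comparable to `M ^ γ`. Otherwise it lies in the ball of radius `R = 2√d ℓ`, comparable to `M`,
and by scaling `∫_{B_R} ‖x‖ ^ γ = R^{d+γ} ∫_{B_1} ‖x‖ ^ γ`, which is finite as `γ > -d`.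
-/

open Metric Set

section NormRpow

variable {E : Type*} [NormedAddCommGroup E] [NormedSpace ℝ E] [FiniteDimensional ℝ E]
  [MeasurableSpace E] [BorelSpace E] (μ : Measure E) [μ.IsAddHaarMeasure]

theorem locallyIntegrable_norm_rpow (hE : 1 ≤ Module.finrank ℝ E) {γ : ℝ}
    (hγ : -(Module.finrank ℝ E : ℝ) < γ) : LocallyIntegrable (fun x : E ↦ ‖x‖ ^ γ) μ :=
  locallyIntegrable_of_norm_le_rpow hE (C := 1) (α := -γ) (by linarith)
    (ae_of_all _ fun x ↦ by simp [abs_of_nonneg (Real.rpow_nonneg (norm_nonneg x) γ)])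
    (continuous_norm.measurable.pow_const γ).aestronglyMeasurable

theorem setIntegral_ball_norm_rpow (γ : ℝ) {R : ℝ} (hR : 0 < R) :
    ∫ x in ball (0 : E) R, ‖x‖ ^ γ ∂μ =
      R ^ Module.finrank ℝ E * R ^ γ * ∫ x in ball (0 : E) 1, ‖x‖ ^ γ ∂μ := by
  have h := Measure.setIntegral_comp_smul_of_pos μ (fun x : E ↦ ‖x‖ ^ γ) (ball 0 1) hR
  simp only [smul_unitBall_of_pos hR, smul_eq_mul, norm_smul, Real.norm_of_nonneg hR.le,
    Real.mul_rpow hR.le (norm_nonneg _), integral_const_mul] at h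
  rw [mul_assoc, h, ← mul_assoc, mul_inv_cancel₀ (by positivity), one_mul]

end NormRpow

theorem rpow_le_add_rpow_mul_rpow_of_mem_Icc {a b t M : ℝ} (γ : ℝ) (ha : 0 < a) (hM : 0 < M)
    (ht : t ∈ Icc (a * M) (b * M)) : t ^ γ ≤ (a ^ γ + b ^ γ) * M ^ γ := by
  have hb : 0 < b := pos_of_mul_pos_left ((mul_pos ha hM).trans_le (ht.1.trans ht.2)) hM.le
  have h0 : 0 < t := (mul_pos ha hM).trans_le ht.1
  rw [add_mul, ← Real.mul_rpow ha.le hM.le, ← Real.mul_rpow hb.le hM.le]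
  rcases le_total 0 γ with hγ | hγ
  · exact (Real.rpow_le_rpow h0.le ht.2 hγ).trans (le_add_of_nonneg_left (by positivity))
  · exact (Real.rpow_le_rpow_of_nonpos (by positivity) ht.1 hγ).trans
      (le_add_of_nonneg_right (by positivity))

variable {d : ℕ}

theorem cube_eq_preimage_ofLp (c : EuclideanSpace ℝ (Fin d)) (ℓ : ℝ) :
    cube d c ℓ = WithLp.ofLp ⁻¹' univ.pi fun i ↦ Icc (c i - ℓ / 2) (c i + ℓ / 2) := by
  ext x
  simp only [cube, mem_ofPred_eq, mem_preimage, mem_univ_pi, mem_Icc, abs_le]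
  exact forall_congr' fun i ↦ ⟨fun h ↦ ⟨by linarith, by linarith⟩,
    fun h ↦ ⟨by linarith, by linarith⟩⟩

theorem measurableSet_cube (c : EuclideanSpace ℝ (Fin d)) (ℓ : ℝ) :
    MeasurableSet (cube d c ℓ) := by
  rw [cube_eq_preimage_ofLp]
  exact (MeasurableSet.univ_pi fun _ ↦ measurableSet_Icc).preimage
    (PiLp.volume_preserving_ofLp _).measurable

theorem volume_real_cube (c : EuclideanSpace ℝ (Fin d)) {ℓ : ℝ} (hℓ : 0 ≤ ℓ) :
    volume.real (cube d c ℓ) = ℓ ^ d := by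
  rw [measureReal_def, cube_eq_preimage_ofLp, (PiLp.volume_preserving_ofLp _).measure_preimage
    (MeasurableSet.univ_pi fun _ ↦ measurableSet_Icc).nullMeasurableSet, volume_pi_pi]
  simp [Real.volume_Icc, hℓ]

theorem cube_subset_closedBall (c : EuclideanSpace ℝ (Fin d)) {ℓ : ℝ} (hℓ : 0 ≤ ℓ) :
    cube d c ℓ ⊆ closedBall c (√d * ℓ / 2) := by
  intro x hx
  rw [mem_closedBall, EuclideanSpace.dist_eq]
  calc √(∑ i, dist (x i) (c i) ^ 2) ≤ √(∑ _i : Fin d, (ℓ / 2) ^ 2) := by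
        gcongr with i
        exact hx i
    _ = √d * ℓ / 2 := by
        rw [Finset.sum_const, Finset.card_univ, Fintype.card_fin, nsmul_eq_mul,
          Real.sqrt_mul (Nat.cast_nonneg d), Real.sqrt_sq (by positivity)]
        ring

theorem integrableOn_cube_norm_rpow (hd : 0 < d) {γ : ℝ} (hγ : -(d : ℝ) < γ)
    (c : EuclideanSpace ℝ (Fin d)) {ℓ : ℝ} (hℓ : 0 ≤ ℓ) :
    IntegrableOn (fun x ↦ ‖x‖ ^ γ) (cube d c ℓ) := by
  have hdim : Module.finrank ℝ (EuclideanSpace ℝ (Fin d)) = d := finrank_euclideanSpace_fin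
  exact ((locallyIntegrable_norm_rpow volume (by omega) (by rwa [hdim])).integrableOn_isCompact
    (isCompact_closedBall c _)).mono_set (cube_subset_closedBall c hℓ)

theorem setIntegral_cube_le_of_forall_le {f : EuclideanSpace ℝ (Fin d) → ℝ}
    {c : EuclideanSpace ℝ (Fin d)} {ℓ C : ℝ} (hℓ : 0 ≤ ℓ) (hf : IntegrableOn f (cube d c ℓ))
    (hC : ∀ x ∈ cube d c ℓ, f x ≤ C) : ∫ x in cube d c ℓ, f x ≤ C * ℓ ^ d := by
  have hfin : volume (cube d c ℓ) ≠ ⊤ :=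
    ((measure_mono (cube_subset_closedBall c hℓ)).trans_lt measure_closedBall_lt_top).ne
  calc ∫ x in cube d c ℓ, f x ≤ ∫ _ in cube d c ℓ, C :=
        setIntegral_mono_on hf (integrableOn_const hfin) (measurableSet_cube c ℓ) hC
    _ = C * ℓ ^ d := by rw [setIntegral_const, volume_real_cube c hℓ, smul_eq_mul, mul_comm]

theorem setIntegral_cube_norm_rpow_le_of_far (hd : 0 < d) {γ : ℝ} (hγ : -(d : ℝ) < γ)
    {c : EuclideanSpace ℝ (Fin d)} {ℓ : ℝ} (hℓ : 0 < ℓ) (hc : √d * ℓ ≤ ‖c‖) :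
    ∫ x in cube d c ℓ, ‖x‖ ^ γ ≤ ((1 / 2) ^ γ + (3 / 2) ^ γ) * ℓ ^ d * max ℓ ‖c‖ ^ γ := by
  have hs : 1 ≤ √d := Real.one_le_sqrt.2 (by exact_mod_cast hd)
  have hc₀ : 0 < ‖c‖ := by nlinarith
  rw [max_eq_right (by nlinarith), mul_right_comm]
  refine setIntegral_cube_le_of_forall_le hℓ.le (integrableOn_cube_norm_rpow hd hγ c hℓ.le)
    fun x hx ↦ rpow_le_add_rpow_mul_rpow_of_mem_Icc γ (by norm_num) hc₀ ⟨?_, ?_⟩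
  all_goals
    have := mem_closedBall_iff_norm.1 (cube_subset_closedBall c hℓ.le hx)
    linarith [norm_sub_norm_le c x, norm_sub_rev c x, norm_le_insert' x c]

theorem setIntegral_cube_norm_rpow_le_of_near (hd : 0 < d) {γ : ℝ} (hγ : -(d : ℝ) < γ)
    {c : EuclideanSpace ℝ (Fin d)} {ℓ : ℝ} (hℓ : 0 < ℓ) (hc : ‖c‖ < √d * ℓ) :
    ∫ x in cube d c ℓ, ‖x‖ ^ γ ≤
      (2 * √d) ^ d * (2 ^ γ + (2 * √d) ^ γ) *
        (∫ x in ball (0 : EuclideanSpace ℝ (Fin d)) 1, ‖x‖ ^ γ) * ℓ ^ d * max ℓ ‖c‖ ^ γ := by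
  have hs : 1 ≤ √d := Real.one_le_sqrt.2 (by exact_mod_cast hd)
  have hdim : Module.finrank ℝ (EuclideanSpace ℝ (Fin d)) = d := finrank_euclideanSpace_fin
  set R := 2 * √d * ℓ
  set M := max ℓ ‖c‖
  have hM : 0 < M := hℓ.trans_le (le_max_left _ _)
  have hsub : cube d c ℓ ⊆ ball 0 R := fun x hx ↦ by
    have := mem_closedBall_iff_norm.1 (cube_subset_closedBall c hℓ.le hx)
    rw [mem_ball_zero_iff]
    nlinarith [norm_le_insert' x c]
  have hRM : R ^ γ ≤ (2 ^ γ + (2 * √d) ^ γ) * M ^ γ :=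
    rpow_le_add_rpow_mul_rpow_of_mem_Icc γ two_pos hM
      ⟨by nlinarith [max_le (le_mul_of_one_le_left hℓ.le hs) hc.le],
        by nlinarith [le_max_left ℓ ‖c‖]⟩
  have hI : 0 ≤ ∫ x in ball (0 : EuclideanSpace ℝ (Fin d)) 1, ‖x‖ ^ γ :=
    setIntegral_nonneg measurableSet_ball fun x _ ↦ by positivity
  have hball : IntegrableOn (fun x ↦ ‖x‖ ^ γ) (ball (0 : EuclideanSpace ℝ (Fin d)) R) :=
    ((locallyIntegrable_norm_rpow volume (by omega) (by rwa [hdim])).integrableOn_isCompact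
      (isCompact_closedBall 0 R)).mono_set ball_subset_closedBall
  calc ∫ x in cube d c ℓ, ‖x‖ ^ γ ≤ ∫ x in ball 0 R, ‖x‖ ^ γ :=
        setIntegral_mono_set hball (ae_of_all _ fun x ↦ by positivity) hsub.eventuallyLE
    _ = R ^ d * R ^ γ * ∫ x in ball (0 : EuclideanSpace ℝ (Fin d)) 1, ‖x‖ ^ γ := by
        rw [setIntegral_ball_norm_rpow volume γ (by positivity), hdim]
    _ ≤ R ^ d * ((2 ^ γ + (2 * √d) ^ γ) * M ^ γ) *
          ∫ x in ball (0 : EuclideanSpace ℝ (Fin d)) 1, ‖x‖ ^ γ := by gcongr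
    _ = _ := by rw [mul_pow]; ring

theorem exists_setIntegral_cube_norm_rpow_le (hd : 0 < d) {γ : ℝ} (hγ : -(d : ℝ) < γ) :
    ∃ K : ℝ, 0 < K ∧ ∀ (c : EuclideanSpace ℝ (Fin d)) (ℓ : ℝ), 0 < ℓ →
      ∫ x in cube d c ℓ, ‖x‖ ^ γ ≤ K * ℓ ^ d * max ℓ ‖c‖ ^ γ := by
  set K_far : ℝ := (1 / 2) ^ γ + (3 / 2) ^ γ
  set K_near : ℝ := (2 * √d) ^ d * (2 ^ γ + (2 * √d) ^ γ) *
    ∫ x in ball (0 : EuclideanSpace ℝ (Fin d)) 1, ‖x‖ ^ γ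
  have hK_near : 0 ≤ K_near := by positivity
  refine ⟨K_far + K_near, by positivity, fun c ℓ hℓ ↦ ?_⟩
  have hM : 0 ≤ ℓ ^ d * max ℓ ‖c‖ ^ γ := by positivity
  rcases le_or_gt (√d * ℓ) ‖c‖ with hc | hc
  · calc _ ≤ K_far * ℓ ^ d * max ℓ ‖c‖ ^ γ := setIntegral_cube_norm_rpow_le_of_far hd hγ hℓ hc
      _ ≤ _ := by
        simp only [mul_assoc]
        exact mul_le_mul_of_nonneg_right (le_add_of_nonneg_right hK_near) hM
  · calc _ ≤ K_near * ℓ ^ d * max ℓ ‖c‖ ^ γ := setIntegral_cube_norm_rpow_le_of_near hd hγ hℓ hc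
      _ ≤ _ := by
        simp only [mul_assoc]
        exact mul_le_mul_of_nonneg_right (le_add_of_nonneg_left (by positivity)) hM

section Weight

variable {E : Type*} [NormedAddCommGroup E] {β γ : ℝ}

theorem norm_rpow_mul_max_one_rpow_le (hγ : γ ≤ 0) (x : E) :
    ‖x‖ ^ β * max ‖x‖ 1 ^ γ ≤ ‖x‖ ^ β :=
  mul_le_of_le_one_right (by positivity)
    (Real.rpow_le_one_of_one_le_of_nonpos (le_max_right _ _) hγ)

theorem norm_rpow_mul_max_one_rpow_le_rpow_add (hγ : γ ≤ 0) {x : E} (hx : x ≠ 0) :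
    ‖x‖ ^ β * max ‖x‖ 1 ^ γ ≤ ‖x‖ ^ (β + γ) := by
  have hx₀ : 0 < ‖x‖ := norm_pos_iff.2 hx
  rw [Real.rpow_add hx₀]
  exact mul_le_mul_of_nonneg_left (Real.rpow_le_rpow_of_nonpos hx₀ (le_max_left _ _) hγ)
    (by positivity)

end Weight

theorem stmt12_general (d n : ℕ) (hd : 0 < d) (β p' ρ : ℝ)
    (hβ : -(d : ℝ) < β) (hp' : 1 < p') (hρ : ρ < 0)
    (hβρ : -(d : ℝ) < β + p' * ρ / n) :
    ∃ C : ℝ, 0 < C ∧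
      ∀ (cS : EuclideanSpace ℝ (Fin d)) (ℓ : ℝ), 0 < ℓ →
        (∫ x in cube d cS ℓ, ‖x‖ ^ β * max ‖x‖ 1 ^ (p' * ρ / n)) ≤
          C * ℓ ^ (d : ℕ) * max ℓ ‖cS‖ ^ β * max (max ℓ ‖cS‖) 1 ^ (p' * ρ / n) := by
  set γ := p' * ρ / n
  have hγ : γ ≤ 0 :=
    div_nonpos_of_nonpos_of_nonneg (mul_nonpos_of_nonneg_of_nonpos (by linarith) hρ.le)
      n.cast_nonneg
  -- makes `volume` atomless, so that `x ≠ 0` almost everywhere below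
  have : Nonempty (Fin d) := ⟨⟨0, hd⟩⟩
  obtain ⟨K₁, hK₁, h₁⟩ := exists_setIntegral_cube_norm_rpow_le hd hβρ
  obtain ⟨K₂, hK₂, h₂⟩ := exists_setIntegral_cube_norm_rpow_le hd hβ
  refine ⟨K₁ + K₂, by positivity, fun c ℓ hℓ ↦ ?_⟩
  set M := max ℓ ‖c‖
  have hM : 0 < M := hℓ.trans_le (le_max_left _ _)
  have hσ : 0 ≤ᵐ[volume.restrict (cube d c ℓ)] fun x ↦ ‖x‖ ^ β * max ‖x‖ 1 ^ γ :=
    ae_of_all _ fun x ↦ by positivity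
  rcases le_total 1 M with hM1 | hM1
  · rw [max_eq_left hM1, mul_assoc _ (M ^ β), ← Real.rpow_add hM]
    calc _ ≤ ∫ x in cube d c ℓ, ‖x‖ ^ (β + γ) :=
          integral_mono_of_nonneg hσ (integrableOn_cube_norm_rpow hd hβρ c hℓ.le) <| by
            filter_upwards [ae_restrict_of_ae (compl_mem_ae_iff.2 (measure_singleton 0))]
              with x hx using norm_rpow_mul_max_one_rpow_le_rpow_add hγ hx
      _ ≤ K₁ * ℓ ^ d * M ^ (β + γ) := h₁ c ℓ hℓ
      _ ≤ _ := by gcongr; exact le_add_of_nonneg_right hK₂.le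
  · rw [max_eq_right hM1, Real.one_rpow, mul_one]
    calc _ ≤ ∫ x in cube d c ℓ, ‖x‖ ^ β :=
          integral_mono_of_nonneg hσ (integrableOn_cube_norm_rpow hd hβ c hℓ.le)
            (ae_of_all _ (norm_rpow_mul_max_one_rpow_le hγ))
      _ ≤ K₂ * ℓ ^ d * M ^ β := h₂ c ℓ hℓ
      _ ≤ _ := by gcongr; exact le_add_of_nonneg_left hK₁.le

/-- For `σ(x) = |x|^β max(|x|,1)^{p'ρ/n}` with `β > -d`, `p' > 1`, `ρ < 0` and
`β + p'ρ/n > -d`, one has `∫_S σ ≤ C |S| max(ℓ_S,|c_S|)^β max(ℓ_S,|c_S|,1)^{p'ρ/n}`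
for all cubes `S`, with `C` depending only on `d, β, p', ρ, n`. -/
theorem stmt12 (d n : ℕ) (hd : 0 < d) (hn : 1 ≤ n) (β p' ρ : ℝ)
    (hβ : -(d : ℝ) < β) (hp' : 1 < p') (hρ : ρ < 0)
    (hβρ : -(d : ℝ) < β + p' * ρ / n) :
    ∃ C : ℝ, 0 < C ∧
      ∀ (cS : EuclideanSpace ℝ (Fin d)) (ℓ : ℝ), 0 < ℓ →
        (∫ x in cube d cS ℓ, ‖x‖ ^ β * max ‖x‖ 1 ^ (p' * ρ / n)) ≤
          C * ℓ ^ (d : ℕ) * max ℓ ‖cS‖ ^ β * max (max ℓ ‖cS‖) 1 ^ (p' * ρ / n) :=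
  stmt12_general d n hd β p' ρ hβ hp' hρ hβρ
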